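/- arXiv:1210.2866 — 8 statements merged into one kernel-verified Lean document; each statement's English description precedes it below -/
import Mathlib

section
/- For all x ≥ 0 and all λ with 0 ≤ λ ≤ 1, it holds that log((1+λx)/(1+x)^λ) ≤ (λ(1-λ)/2)·x². -/
/-!
The difference `φ(t) = l(1-l)t²/2 + l log(1+t) - log(1+lt)` between the two sides vanishes at
`t = 0`, and its derivative is
`l(1-l)t - l(1-l)t / ((1+t)(1+lt)) = l(1-l)t (1 - 1/((1+t)(1+lt)))`,
which is nonnegative for `t ≥ 0` because `(1+t)(1+lt) ≥ 1`. Hence `φ(x) ≥ φ(0) = 0`.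
-/

open Real Set

noncomputable def logRatioSlack (l t : ℝ) : ℝ :=
  l * (1 - l) / 2 * t ^ 2 + l * log (1 + t) - log (1 + l * t)

namespace logRatioSlack

theorem apply_zero (l : ℝ) : logRatioSlack l 0 = 0 := by
  simp [logRatioSlack]

theorem hasDerivAt (l : ℝ) {t : ℝ} (ht : 1 + t ≠ 0) (hlt : 1 + l * t ≠ 0) :
    HasDerivAt (logRatioSlack l) (l * (1 - l) * t * (1 - 1 / ((1 + t) * (1 + l * t)))) t := by
  have hquad : HasDerivAt (fun t : ℝ => l * (1 - l) / 2 * t ^ 2) (l * (1 - l) * t) t :=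
    ((hasDerivAt_pow 2 t).const_mul (l * (1 - l) / 2)).congr_deriv (by push_cast; ring)
  have hlog : HasDerivAt (fun t : ℝ => log (1 + t)) (1 / (1 + t)) t := by
    simpa using ((hasDerivAt_id t).const_add 1).log ht
  have hlog_mul : HasDerivAt (fun t : ℝ => log (1 + l * t)) (l / (1 + l * t)) t := by
    simpa using (((hasDerivAt_id t).const_mul l).const_add 1).log hlt
  refine ((hquad.add (hlog.const_mul l)).sub hlog_mul).congr_deriv ?_
  field_simp
  ring

theorem deriv_nonneg {l t : ℝ} (hl0 : 0 ≤ l) (hl1 : l ≤ 1) (ht : 0 ≤ t) :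
    0 ≤ deriv (logRatioSlack l) t := by
  rw [(hasDerivAt l (by positivity) (by positivity)).deriv]
  have hprod : 1 ≤ (1 + t) * (1 + l * t) := by nlinarith [mul_nonneg hl0 ht]
  have hinv : 1 / ((1 + t) * (1 + l * t)) ≤ 1 := div_le_one_of_le₀ hprod (by positivity)
  have hcoef : 0 ≤ l * (1 - l) * t := mul_nonneg (mul_nonneg hl0 (by linarith)) ht
  exact mul_nonneg hcoef (by linarith)

theorem monotoneOn {l : ℝ} (hl0 : 0 ≤ l) (hl1 : l ≤ 1) :
    MonotoneOn (logRatioSlack l) (Ici 0) := by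
  have hdiff : ∀ t ∈ Ici (0 : ℝ), DifferentiableAt ℝ (logRatioSlack l) t := fun t (ht : 0 ≤ t) =>
    (hasDerivAt l (by positivity) (by positivity)).differentiableAt
  exact monotoneOn_of_deriv_nonneg (convex_Ici 0)
    (fun t ht => (hdiff t ht).continuousAt.continuousWithinAt)
    (fun t ht => (hdiff t (interior_subset ht)).differentiableWithinAt)
    (fun t ht => deriv_nonneg hl0 hl1 (interior_subset ht))

end logRatioSlack

/-- For all `x ≥ 0` and `λ ∈ [0,1]`, `log((1+λx)/(1+x)^λ) ≤ (λ(1-λ)/2)·x²`. -/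
theorem log_ratio_le_of_mem_unitInterval (x : ℝ) (hx : 0 ≤ x) (l : ℝ)
    (hl0 : 0 ≤ l) (hl1 : l ≤ 1) :
    Real.log ((1 + l * x) / (1 + x) ^ l) ≤ l * (1 - l) / 2 * x ^ 2 := by
  have hslack : 0 ≤ logRatioSlack l x := by
    simpa [logRatioSlack.apply_zero] using
      logRatioSlack.monotoneOn hl0 hl1 self_mem_Ici hx hx
  rw [Real.log_div (by positivity) (by positivity), Real.log_rpow (by positivity)]
  unfold logRatioSlack at hslack
  linarith
end

section
/- For all x ≥ 0 and all a ≥ 1, it holds that log((1+x)^a/(1+ax)) ≤ (a(a-1)/2)·x². -/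
/-!
Write `φ(t) = a log (1 + t) - log (1 + a t)`, so that the left-hand side is `φ x` and `φ 0 = 0`.
Its derivative `a / (1 + t) - a / (1 + a t) = a (a - 1) t / ((1 + t) (1 + a t))` is at most
`a (a - 1) t` for `t ≥ 0`, since the denominator is at least `1`; integrating from `0` to `x`
gives the bound `a (a - 1) x² / 2`.
-/

open Real Set

theorem le_div_two_mul_sq_of_deriv_le_mul {f f' : ℝ → ℝ} {c x : ℝ} (hx : 0 ≤ x)
    (hf : ∀ t ∈ Icc 0 x, HasDerivAt f (f' t) t) (hf0 : f 0 ≤ 0)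
    (hf' : ∀ t ∈ Ico 0 x, f' t ≤ c * t) :
    f x ≤ c / 2 * x ^ 2 := by
  have hB : ∀ t, HasDerivAt (fun t => c / 2 * t ^ 2) (c * t) t := fun t =>
    ((hasDerivAt_pow 2 t).const_mul (c / 2)).congr_deriv (by ring)
  refine image_le_of_deriv_right_le_deriv_boundary (f := f) (B := fun t => c / 2 * t ^ 2)
    (fun t ht => (hf t ht).continuousAt.continuousWithinAt)
    (fun t ht => (hf t (Ico_subset_Icc_self ht)).hasDerivWithinAt) (by simpa using hf0)
    (fun t _ => (hB t).continuousAt.continuousWithinAt) (fun t _ => (hB t).hasDerivWithinAt)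
    hf' ⟨hx, le_rfl⟩

theorem hasDerivAt_mul_log_one_add_sub_log_one_add_mul {a t : ℝ} (ht : 1 + t ≠ 0)
    (hat : 1 + a * t ≠ 0) :
    HasDerivAt (fun t => a * log (1 + t) - log (1 + a * t))
      (a / (1 + t) - a / (1 + a * t)) t := by
  have h₁ : HasDerivAt (fun t => 1 + t) 1 t := (hasDerivAt_id t).const_add 1
  have h₂ : HasDerivAt (fun t => 1 + a * t) a t := by
    simpa using ((hasDerivAt_id t).const_mul a).const_add 1
  exact (((h₁.log ht).const_mul a).sub (h₂.log hat)).congr_deriv (by ring)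

theorem div_one_add_sub_div_one_add_mul_le {a t : ℝ} (ha : 1 ≤ a) (ht : 0 ≤ t) :
    a / (1 + t) - a / (1 + a * t) ≤ a * (a - 1) * t := by
  have ha₀ : 0 ≤ a := by linarith
  have hnum : 0 ≤ a * (a - 1) * t := mul_nonneg (mul_nonneg ha₀ (by linarith)) ht
  have hden : 1 ≤ (1 + t) * (1 + a * t) :=
    one_le_mul_of_one_le_of_one_le (by linarith) (le_add_of_nonneg_right (mul_nonneg ha₀ ht))
  calc a / (1 + t) - a / (1 + a * t) = a * (a - 1) * t / ((1 + t) * (1 + a * t)) := by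
        field_simp
        ring
    _ ≤ a * (a - 1) * t := div_le_self hnum hden

/-- For all `x ≥ 0` and `a ≥ 1`, `log((1+x)^a/(1+ax)) ≤ (a(a-1)/2)·x²`. -/
theorem log_rpow_ratio_le (x : ℝ) (hx : 0 ≤ x) (a : ℝ) (ha : 1 ≤ a) :
    Real.log ((1 + x) ^ a / (1 + a * x)) ≤ a * (a - 1) / 2 * x ^ 2 := by
  have hpos : ∀ t, 0 ≤ t → 0 < 1 + t ∧ 0 < 1 + a * t := fun t ht =>
    ⟨by linarith, by nlinarith⟩
  rw [log_div (rpow_pos_of_pos (hpos x hx).1 a).ne' (hpos x hx).2.ne', log_rpow (hpos x hx).1]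
  exact le_div_two_mul_sq_of_deriv_le_mul (f := fun t => a * log (1 + t) - log (1 + a * t)) hx
    (fun t ht => hasDerivAt_mul_log_one_add_sub_log_one_add_mul (hpos t ht.1).1.ne'
      (hpos t ht.1).2.ne')
    (by simp) (fun t ht => div_one_add_sub_div_one_add_mul_le ha ht.1)
end

section
/- For all x ≥ 0 and all λ with 0 ≤ λ ≤ 1, it holds that 0 ≤ (1+λx) − (1+x)^λ ≤ (λ(1-λ)/2)·x². -/
/-!
The lower bound is Bernoulli's inequality for exponents in `[0, 1]`. For the upper bound, the
function `t ↦ (1 + t) ^ l - (1 + l * t) + l * (1 - l) / 2 * t ^ 2` vanishes at `0` and has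
derivative `l * ((1 + t) ^ (l - 1) - (1 + (l - 1) * t))`, which is nonnegative by Bernoulli's
inequality for the exponent `l - 1 ∈ [-1, 0]`.
-/

open Real Set

theorem one_add_mul_self_le_rpow_one_add_of_nonpos {s : ℝ} (hs : -1 < s) {p : ℝ}
    (hp1 : -1 ≤ p) (hp2 : p ≤ 0) : 1 + p * s ≤ (1 + s) ^ p := by
  have hs' : 0 < 1 + s := by linarith
  have hu : 0 < 1 + -p * s := by
    rcases le_total 0 s with h | h <;> nlinarith
  have hbern : (1 + s) ^ (-p) ≤ 1 + -p * s :=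
    rpow_one_add_le_one_add_mul_self hs.le (by linarith) (by linarith)
  calc 1 + p * s ≤ (1 + -p * s)⁻¹ := by
        rw [← one_div, le_div_iff₀ hu]
        nlinarith [sq_nonneg (p * s)]
    _ ≤ ((1 + s) ^ (-p))⁻¹ := inv_anti₀ (rpow_pos_of_pos hs' _) hbern
    _ = (1 + s) ^ p := by rw [rpow_neg hs'.le, inv_inv]

theorem monotoneOn_rpow_one_add_sub_add_sq {l : ℝ} (hl0 : 0 ≤ l) (hl1 : l ≤ 1) :
    MonotoneOn (fun t : ℝ ↦ (1 + t) ^ l - (1 + l * t) + l * (1 - l) / 2 * t ^ 2) (Ioi (-1)) := by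
  have hderiv : ∀ t ∈ Ioi (-1 : ℝ), HasDerivAt
      (fun t : ℝ ↦ (1 + t) ^ l - (1 + l * t) + l * (1 - l) / 2 * t ^ 2)
      (l * ((1 + t) ^ (l - 1) - (1 + (l - 1) * t))) t := by
    intro t ht
    have hpow : HasDerivAt (fun t : ℝ ↦ (1 + t) ^ l) (1 * l * (1 + t) ^ (l - 1)) t :=
      ((hasDerivAt_id t).const_add 1).rpow_const (Or.inl (by simp at ht ⊢; linarith))
    have hlin : HasDerivAt (fun t : ℝ ↦ 1 + l * t) l t := by
      simpa using ((hasDerivAt_id t).const_mul l).const_add 1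
    have hsq : HasDerivAt (fun t : ℝ ↦ l * (1 - l) / 2 * t ^ 2) (l * (1 - l) / 2 * (2 * t)) t := by
      simpa using (hasDerivAt_pow 2 t).const_mul (l * (1 - l) / 2)
    exact ((hpow.sub hlin).add hsq).congr_deriv (by ring)
  refine monotoneOn_of_hasDerivWithinAt_nonneg (convex_Ioi _)
    (fun t ht ↦ (hderiv t ht).continuousAt.continuousWithinAt)
    (fun t ht ↦ (hderiv t (interior_subset ht)).hasDerivWithinAt) fun t ht ↦ ?_
  rw [interior_Ioi] at ht
  exact mul_nonneg hl0 <| sub_nonneg.2 <|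
    one_add_mul_self_le_rpow_one_add_of_nonpos ht (by linarith) (by linarith)

/-- For `x ≥ 0`, `λ ∈ [0,1]`: `0 ≤ (1+λx) − (1+x)^λ ≤ (λ(1-λ)/2)·x²`. -/
theorem sub_rpow_bounds (x : ℝ) (hx : 0 ≤ x) (l : ℝ) (hl0 : 0 ≤ l) (hl1 : l ≤ 1) :
    0 ≤ (1 + l * x) - (1 + x) ^ l ∧ (1 + l * x) - (1 + x) ^ l ≤ l * (1 - l) / 2 * x ^ 2 := by
  constructor
  · linarith [rpow_one_add_le_one_add_mul_self (by linarith : (-1 : ℝ) ≤ x) hl0 hl1]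
  · have hmono := monotoneOn_rpow_one_add_sub_add_sq hl0 hl1
      (mem_Ioi.2 (by norm_num) : (0 : ℝ) ∈ Ioi (-1)) (mem_Ioi.2 (by linarith)) hx
    norm_num at hmono
    linarith
end

section
/- For all x ≥ 0 and all α, λ ∈ [0,1], setting β = √(1−α), one has λ(1−β)x + (1+βx)^λ − (1+x)^λ ≥ 0; equivalently, the ratio (1 + λx + (1+βx)^λ − (1+λβx))/(1+x)^λ is at least 1. -/
/-! Write `1 + x = (1 + βx) + (1 - β)x`. Since `t ↦ t ^ λ` has slope at most `λ` on `[1, ∞)`,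
raising to the power `λ` adds at most `λ(1 - β)x` to `(1 + βx) ^ λ`. -/

open Real

theorem Real.rpow_add_le_rpow_add_mul {a d l : ℝ} (ha : 1 ≤ a) (hd : 0 ≤ d)
    (hl0 : 0 ≤ l) (hl1 : l ≤ 1) : (a + d) ^ l ≤ a ^ l + l * d := by
  have ha0 : 0 < a := by linarith
  calc (a + d) ^ l = a ^ l * (1 + d / a) ^ l := by
        rw [← mul_rpow ha0.le (by positivity), mul_add, mul_one, mul_div_cancel₀ d ha0.ne']
    _ ≤ a ^ l * (1 + l * (d / a)) := by
        gcongr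
        exact rpow_one_add_le_one_add_mul_self (by linarith [div_nonneg hd ha0.le]) hl0 hl1
    _ = a ^ l + l * d * (a ^ l / a) := by ring
    _ ≤ a ^ l + l * d := by
        have : a ^ l / a ≤ 1 := (div_le_one ha0).mpr (rpow_le_self_of_one_le ha hl1)
        have : 0 ≤ l * d := mul_nonneg hl0 hd
        nlinarith

theorem combined_rpow_ratio_ge_one_general (x : ℝ) (hx : 0 ≤ x) (α l : ℝ)
    (hα0 : 0 ≤ α) (hl0 : 0 ≤ l) (hl1 : l ≤ 1) :
    0 ≤ l * (1 - Real.sqrt (1 - α)) * x + (1 + Real.sqrt (1 - α) * x) ^ l - (1 + x) ^ l ∧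
    1 ≤ (1 + l * x + (1 + Real.sqrt (1 - α) * x) ^ l - (1 + l * Real.sqrt (1 - α) * x)) /
        (1 + x) ^ l := by
  set β := √(1 - α)
  have hβ1 : β ≤ 1 := sqrt_le_one.mpr (by linarith)
  have key := rpow_add_le_rpow_add_mul (a := 1 + β * x) (d := (1 - β) * x)
    (by linarith [mul_nonneg (sqrt_nonneg (1 - α)) hx]) (mul_nonneg (by linarith) hx) hl0 hl1
  rw [show 1 + β * x + (1 - β) * x = 1 + x by ring] at key
  refine ⟨by linarith, ?_⟩
  rw [le_div_iff₀ (by positivity), one_mul]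
  linarith

/-- For `x ≥ 0`, `α, λ ∈ [0,1]` and `β = √(1−α)`:
`λ(1−β)x + (1+βx)^λ − (1+x)^λ ≥ 0`; equivalently
`(1 + λx + (1+βx)^λ − (1+λβx))/(1+x)^λ ≥ 1`. -/
theorem combined_rpow_ratio_ge_one (x : ℝ) (hx : 0 ≤ x) (α l : ℝ)
    (hα0 : 0 ≤ α) (hα1 : α ≤ 1) (hl0 : 0 ≤ l) (hl1 : l ≤ 1) :
    0 ≤ l * (1 - Real.sqrt (1 - α)) * x + (1 + Real.sqrt (1 - α) * x) ^ l - (1 + x) ^ l ∧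
    1 ≤ (1 + l * x + (1 + Real.sqrt (1 - α) * x) ^ l - (1 + l * Real.sqrt (1 - α) * x)) /
        (1 + x) ^ l :=
  combined_rpow_ratio_ge_one_general x hx α l hα0 hl0 hl1
end

section
/- For all x ≥ 0 and all α, λ ∈ [0,1], setting β = √(1−α), it holds that log((λ(1−β)x + (1+βx)^λ)/(1+x)^λ) ≤ (1−β²)·(λ(1−λ)/2)·x² = α·(λ(1−λ)/2)·x². -/
/-!
Write `β = √(1 - α)` and `C = λ(1-λ)x²/2`. The function
`t ↦ λ(1-t)x + (1+tx)^λ + t²C` is nondecreasing on `t ≥ 0`: its derivative is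
`λx((1+tx)^(λ-1) - 1 + (1-λ)tx)`, which is nonnegative by Bernoulli's inequality for the
exponent `λ - 1 ≤ 0`. Comparing `t = β` with `t = 1` bounds the numerator `N` by
`(1+x)^λ + (1-β²)C ≤ (1+x)^λ + αC`, and
`log (N / (1+x)^λ) ≤ N / (1+x)^λ - 1 ≤ N - (1+x)^λ` because `(1+x)^λ ≥ 1`.
-/

open Real Set

theorem one_sub_mul_le_rpow_one_add_neg {u p : ℝ} (hu : -1 < u) (hp0 : 0 ≤ p) (hp1 : p ≤ 1) :
    1 - p * u ≤ (1 + u) ^ (-p) := by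
  have hbase : 0 < 1 + u := by linarith
  have hpu : 0 < 1 + p * u := by
    rcases le_total 0 u with hu0 | hu0 <;> nlinarith
  calc 1 - p * u ≤ (1 + p * u)⁻¹ := by
        rw [← one_div, le_div_iff₀ hpu]
        nlinarith [sq_nonneg (p * u)]
    _ ≤ ((1 + u) ^ p)⁻¹ :=
        inv_anti₀ (rpow_pos_of_pos hbase p) (rpow_one_add_le_one_add_mul_self hu.le hp0 hp1)
    _ = (1 + u) ^ (-p) := (rpow_neg hbase.le p).symm

theorem hasDerivAt_mul_one_sub_add_rpow {l x t : ℝ} (ht : 0 < 1 + t * x) :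
    HasDerivAt (fun s => l * (1 - s) * x + (1 + s * x) ^ l)
      (l * x * ((1 + t * x) ^ (l - 1) - 1)) t := by
  have hlin : HasDerivAt (fun s => 1 + s * x) x t := by
    simpa using ((hasDerivAt_id t).mul_const x).const_add 1
  have hpow := (hasDerivAt_rpow_const (p := l) (Or.inl ht.ne')).comp t hlin
  have hline : HasDerivAt (fun s => l * (1 - s) * x) (l * -1 * x) t := by
    simpa using (((hasDerivAt_id t).const_sub 1).const_mul l).mul_const x
  exact (hline.add hpow).congr_deriv (by ring)

theorem monotoneOn_mul_one_sub_add_rpow_add_sq {l x : ℝ} (hl0 : 0 ≤ l) (hl1 : l ≤ 1)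
    (hx : 0 ≤ x) :
    MonotoneOn (fun t => l * (1 - t) * x + (1 + t * x) ^ l + t ^ 2 * (l * (1 - l) / 2 * x ^ 2))
      (Ici 0) := by
  have hderiv : ∀ t ∈ Ici (0 : ℝ), HasDerivAt
      (fun t => l * (1 - t) * x + (1 + t * x) ^ l + t ^ 2 * (l * (1 - l) / 2 * x ^ 2))
      (l * x * ((1 + t * x) ^ (l - 1) - 1 + (1 - l) * (t * x))) t := fun t ht => by
    have hsq := (hasDerivAt_pow 2 t).mul_const (l * (1 - l) / 2 * x ^ 2)
    have hbase : 0 < 1 + t * x := by nlinarith [mem_Ici.1 ht]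
    exact ((hasDerivAt_mul_one_sub_add_rpow hbase).add hsq).congr_deriv (by push_cast; ring)
  refine monotoneOn_of_hasDerivWithinAt_nonneg (convex_Ici 0)
    (fun t ht => (hderiv t ht).continuousAt.continuousWithinAt)
    (fun t ht => (hderiv t (interior_subset ht)).hasDerivWithinAt) fun t ht => ?_
  rw [interior_Ici] at ht
  have htx : 0 ≤ t * x := mul_nonneg ht.le hx
  have hbern := one_sub_mul_le_rpow_one_add_neg (u := t * x) (by linarith) (sub_nonneg.2 hl1)
    (by linarith)
  rw [neg_sub] at hbern
  exact mul_nonneg (mul_nonneg hl0 hx) (by linarith)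

theorem log_combined_rpow_ratio_le_general (x : ℝ) (hx : 0 ≤ x) (α l : ℝ)
    (hα0 : 0 ≤ α) (hl0 : 0 ≤ l) (hl1 : l ≤ 1) :
    Real.log ((l * (1 - Real.sqrt (1 - α)) * x + (1 + Real.sqrt (1 - α) * x) ^ l) /
        (1 + x) ^ l)
      ≤ α * (l * (1 - l) / 2) * x ^ 2 := by
  set β := √(1 - α)
  set N := l * (1 - β) * x + (1 + β * x) ^ l
  have hβ0 : 0 ≤ β := sqrt_nonneg _
  have hβ1 : β ≤ 1 := sqrt_le_one.2 (by linarith)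
  have hβsq : 1 - α ≤ β ^ 2 := sq_sqrt' (x := 1 - α) ▸ le_max_left _ _
  have hC : 0 ≤ l * (1 - l) / 2 * x ^ 2 := by
    have := mul_nonneg hl0 (sub_nonneg.2 hl1)
    positivity
  have hαC : 0 ≤ α * (l * (1 - l) / 2) * x ^ 2 := by
    rw [mul_assoc]
    exact mul_nonneg hα0 hC
  have hN : 0 < N := by
    have : 0 ≤ l * (1 - β) * x := mul_nonneg (mul_nonneg hl0 (by linarith)) hx
    have : 0 < (1 + β * x) ^ l := rpow_pos_of_pos (by positivity) l
    linarith
  have hD : 1 ≤ (1 + x) ^ l := one_le_rpow (by linarith) hl0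
  have hmono := monotoneOn_mul_one_sub_add_rpow_add_sq hl0 hl1 hx hβ0 (mem_Ici.2 zero_le_one) hβ1
  simp only [sub_self, mul_zero, zero_mul, one_mul, one_pow, zero_add] at hmono
  have hdiff : N - (1 + x) ^ l ≤ α * (l * (1 - l) / 2) * x ^ 2 := by
    linarith [mul_le_mul_of_nonneg_right hβsq hC]
  calc log (N / (1 + x) ^ l) ≤ N / (1 + x) ^ l - 1 := log_le_sub_one_of_pos (by positivity)
    _ = (N - (1 + x) ^ l) / (1 + x) ^ l := by field_simp
    _ ≤ α * (l * (1 - l) / 2) * x ^ 2 :=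
        div_le_of_le_mul₀ (by positivity) hαC (hdiff.trans (le_mul_of_one_le_right hαC hD))

/-- For `x ≥ 0`, `α, λ ∈ [0,1]` and `β = √(1−α)`:
`log((λ(1−β)x + (1+βx)^λ)/(1+x)^λ) ≤ α·(λ(1−λ)/2)·x²`. -/
theorem log_combined_rpow_ratio_le (x : ℝ) (hx : 0 ≤ x) (α l : ℝ)
    (hα0 : 0 ≤ α) (hα1 : α ≤ 1) (hl0 : 0 ≤ l) (hl1 : l ≤ 1) :
    Real.log ((l * (1 - Real.sqrt (1 - α)) * x + (1 + Real.sqrt (1 - α) * x) ^ l) /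
        (1 + x) ^ l)
      ≤ α * (l * (1 - l) / 2) * x ^ 2 :=
  log_combined_rpow_ratio_le_general x hx α l hα0 hl0 hl1
end

section
/- For all β, λ ∈ [0,1] and x ≥ 0, it holds that 1 ≤ β(1−λ)x(1+βx)^λ + (1+βx)^{λ−1}. -/
/-! Writing `s = βx` and `(1 + s) ^ λ = (1 + s) ^ (λ - 1) (1 + s)`, the claim becomes
`(1 + s) ^ (1 - λ) ≤ 1 + (1 - λ) s (1 + s)`, which follows from Bernoulli's inequality
`(1 + s) ^ (1 - λ) ≤ 1 + (1 - λ) s` for the exponent `1 - λ ∈ [0, 1]`. -/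

open Real

lemma one_add_rpow_one_sub_le {s l : ℝ} (hs : -1 < s) (hl0 : 0 ≤ l) (hl1 : l ≤ 1) :
    (1 + s) ^ (1 - l) ≤ 1 + (1 - l) * s * (1 + s) := by
  have bernoulli : (1 + s) ^ (1 - l) ≤ 1 + (1 - l) * s :=
    rpow_one_add_le_one_add_mul_self hs.le (by linarith) (by linarith)
  nlinarith [mul_nonneg (sub_nonneg.2 hl1) (sq_nonneg s)]

lemma one_le_mul_one_add_rpow_add_one_add_rpow_sub_one {s l : ℝ} (hs : -1 < s) (hl0 : 0 ≤ l)
    (hl1 : l ≤ 1) : 1 ≤ (1 - l) * s * (1 + s) ^ l + (1 + s) ^ (l - 1) := by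
  have hpos : 0 < 1 + s := by linarith
  have hcancel : (1 + s) ^ (l - 1) * (1 + s) ^ (1 - l) = 1 := by
    rw [← rpow_add hpos]; norm_num
  have hsucc : (1 + s) ^ l = (1 + s) ^ (l - 1) * (1 + s) := by
    rw [← rpow_add_one hpos.ne']; ring_nf
  calc 1 = (1 + s) ^ (l - 1) * (1 + s) ^ (1 - l) := hcancel.symm
    _ ≤ (1 + s) ^ (l - 1) * (1 + (1 - l) * s * (1 + s)) :=
      mul_le_mul_of_nonneg_left (one_add_rpow_one_sub_le hs hl0 hl1) (rpow_pos_of_pos hpos _).le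
    _ = (1 - l) * s * (1 + s) ^ l + (1 + s) ^ (l - 1) := by rw [hsucc]; ring

theorem one_le_aux_combination_general (β l x : ℝ) (hβ0 : 0 ≤ β)
    (hl0 : 0 ≤ l) (hl1 : l ≤ 1) (hx : 0 ≤ x) :
    1 ≤ β * (1 - l) * x * (1 + β * x) ^ l + (1 + β * x) ^ (l - 1) := by
  have hβx : -1 < β * x := by linarith [mul_nonneg hβ0 hx]
  calc 1 ≤ (1 - l) * (β * x) * (1 + β * x) ^ l + (1 + β * x) ^ (l - 1) :=
        one_le_mul_one_add_rpow_add_one_add_rpow_sub_one hβx hl0 hl1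
    _ = β * (1 - l) * x * (1 + β * x) ^ l + (1 + β * x) ^ (l - 1) := by ring

/-- For `β, λ ∈ [0,1]` and `x ≥ 0`: `1 ≤ β(1−λ)x(1+βx)^λ + (1+βx)^(λ−1)`. -/
theorem one_le_aux_combination (β l x : ℝ) (hβ0 : 0 ≤ β) (hβ1 : β ≤ 1)
    (hl0 : 0 ≤ l) (hl1 : l ≤ 1) (hx : 0 ≤ x) :
    1 ≤ β * (1 - l) * x * (1 + β * x) ^ l + (1 + β * x) ^ (l - 1) :=
  one_le_aux_combination_general β l x hβ0 hl0 hl1 hx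
end

section
/- For fixed α, λ ∈ [0,1] with β = √(1−α), the limit as x → 0⁺ of (1/x²)·log((λ(1−β)x + (1+βx)^λ)/(1+x)^λ) equals α·λ(1−λ)/2. -/
/-!
Write `N(x) = λ(1−β)x + (1+βx)^λ` and `F(x) = log N(x) − λ log(1+x)`, the logarithm of the
ratio. Near `0` everything is smooth, `F(0) = 0`, and the coefficient `λ(1−β)` is exactly the one
making `F'(0) = N'(0) − λ = 0`. Hence `F(x)/x² → F''(0)/2` (L'Hôpital once, then the definition
of `F''(0)`), and `F''(0) = N''(0) − N'(0)² + λ = β²λ(λ−1) − λ² + λ = (1−β²)λ(1−λ) = αλ(1−λ)`.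
-/

open Filter Topology Real

theorem tendsto_div_sq_of_hasDerivAt {f f' : ℝ → ℝ} {c : ℝ}
    (hf : ∀ᶠ x in 𝓝 0, HasDerivAt f (f' x) x) (hf' : HasDerivAt f' c 0)
    (hf0 : f 0 = 0) (hf'0 : f' 0 = 0) :
    Tendsto (fun x => f x / x ^ 2) (𝓝[≠] 0) (𝓝 (c / 2)) := by
  have hslope : Tendsto (fun x => f' x / x) (𝓝[≠] 0) (𝓝 c) := by
    simpa [slope_fun_def_field, hf'0] using hasDerivAt_iff_tendsto_slope.mp hf'
  refine HasDerivAt.lhopital_zero_nhdsNE (g' := fun x => 2 * x)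
    (eventually_nhdsWithin_of_eventually_nhds hf)
    (.of_forall fun x => by simpa [mul_comm] using hasDerivAt_pow 2 x)
    (eventually_nhdsWithin_of_forall fun x hx => mul_ne_zero two_ne_zero hx) ?_ ?_ ?_
  · simpa [hf0] using hf.self_of_nhds.continuousAt.tendsto.mono_left nhdsWithin_le_nhds
  · simpa using ((continuous_pow 2).tendsto' (0 : ℝ) 0 (by simp)).mono_left nhdsWithin_le_nhds
  · simpa [div_mul_eq_div_div_swap, div_eq_mul_inv, mul_assoc] using hslope.div_const 2

section
variable (a β l : ℝ)

theorem hasDerivAt_mul_add_one_add_mul_rpow {x : ℝ} (hx : 1 + β * x ≠ 0) :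
    HasDerivAt (fun x => a * x + (1 + β * x) ^ l) (a + β * l * (1 + β * x) ^ (l - 1)) x := by
  have hbase : HasDerivAt (fun x => 1 + β * x) β x := by
    simpa using ((hasDerivAt_id x).const_mul β).const_add 1
  exact (((hasDerivAt_id' x).const_mul a).add
    (hbase.rpow_const (p := l) (.inl hx))).congr_deriv (by ring)

theorem hasDerivAt_const_add_mul_one_add_mul_rpow_zero :
    HasDerivAt (fun x => a + β * l * (1 + β * x) ^ (l - 1)) (β ^ 2 * l * (l - 1)) 0 := by
  have hbase : HasDerivAt (fun x => 1 + β * x) β 0 := by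
    simpa using ((hasDerivAt_id (0 : ℝ)).const_mul β).const_add 1
  exact (((hbase.rpow_const (p := l - 1) (.inl (by simp))).const_mul (β * l)).const_add
    a).congr_deriv (by simp only [mul_zero, add_zero, one_rpow]; ring)

theorem eventually_pos_mul_add_one_add_mul_rpow :
    ∀ᶠ x in 𝓝 0, 0 < a * x + (1 + β * x) ^ l :=
  (hasDerivAt_mul_add_one_add_mul_rpow a β l (by simp)).continuousAt.eventually
    (lt_mem_nhds (by simp))

theorem eventually_hasDerivAt_log_mul_add_one_add_mul_rpow_sub :
    ∀ᶠ x in 𝓝 0, HasDerivAt (fun x => log (a * x + (1 + β * x) ^ l) - l * log (1 + x))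
      ((a + β * l * (1 + β * x) ^ (l - 1)) / (a * x + (1 + β * x) ^ l) - l / (1 + x)) x := by
  have hbase : ∀ᶠ x in 𝓝 (0 : ℝ), 0 < 1 + β * x :=
    (continuous_const.add (continuous_const.mul continuous_id)).continuousAt.eventually
      (lt_mem_nhds (by simp))
  have hshift : ∀ᶠ x in 𝓝 (0 : ℝ), 0 < 1 + x :=
    (continuous_const.add continuous_id).continuousAt.eventually (lt_mem_nhds (by simp))
  filter_upwards [hbase, eventually_pos_mul_add_one_add_mul_rpow a β l, hshift]
    with x hbase hnum hshift
  have hlog : HasDerivAt (fun x => log (1 + x)) (1 / (1 + x)) x := by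
    simpa using ((hasDerivAt_id x).const_add 1).log hshift.ne'
  exact (((hasDerivAt_mul_add_one_add_mul_rpow a β l hbase.ne').log hnum.ne').sub
    (hlog.const_mul l)).congr_deriv (by ring)

theorem hasDerivAt_logDeriv_mul_add_one_add_mul_rpow_sub_zero :
    HasDerivAt (fun x => (a + β * l * (1 + β * x) ^ (l - 1)) / (a * x + (1 + β * x) ^ l)
        - l / (1 + x))
      (β ^ 2 * l * (l - 1) - (a + β * l) ^ 2 + l) 0 := by
  have hshift : HasDerivAt (fun x : ℝ => 1 + x) 1 0 := (hasDerivAt_id' 0).const_add 1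
  exact (((hasDerivAt_const_add_mul_one_add_mul_rpow_zero a β l).div
    (hasDerivAt_mul_add_one_add_mul_rpow a β l (by simp)) (by simp)).sub
    ((hshift.inv (by simp)).const_mul l)).congr_deriv
    (by simp only [mul_zero, add_zero, one_rpow]; ring)

end

theorem tendsto_log_combined_ratio_div_sq_nhdsNE (β l : ℝ) :
    Tendsto (fun x : ℝ => (1 / x ^ 2) * log ((l * (1 - β) * x + (1 + β * x) ^ l) / (1 + x) ^ l))
      (𝓝[≠] 0) (𝓝 ((1 - β ^ 2) * (l * (1 - l)) / 2)) := by
  have h := tendsto_div_sq_of_hasDerivAt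
    (eventually_hasDerivAt_log_mul_add_one_add_mul_rpow_sub (l * (1 - β)) β l)
    (hasDerivAt_logDeriv_mul_add_one_add_mul_rpow_sub_zero (l * (1 - β)) β l)
    (by simp) (by simp only [mul_zero, add_zero, one_rpow]; ring)
  rw [show β ^ 2 * l * (l - 1) - (l * (1 - β) + β * l) ^ 2 + l = (1 - β ^ 2) * (l * (1 - l)) by
    ring] at h
  refine h.congr' (eventually_nhdsWithin_of_eventually_nhds ?_)
  have hshift : ∀ᶠ x in 𝓝 (0 : ℝ), 0 < 1 + x :=
    (continuous_const.add continuous_id).continuousAt.eventually (lt_mem_nhds (by simp))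
  filter_upwards [eventually_pos_mul_add_one_add_mul_rpow (l * (1 - β)) β l, hshift]
    with x hnum hshift
  rw [log_div hnum.ne' (rpow_pos_of_pos hshift l).ne', log_rpow hshift, one_div_mul_eq_div]

theorem tendsto_log_combined_ratio_div_sq_general (α l : ℝ)
    (hα1 : α ≤ 1) :
    Tendsto (fun x : ℝ =>
        (1 / x ^ 2) * Real.log ((l * (1 - Real.sqrt (1 - α)) * x +
          (1 + Real.sqrt (1 - α) * x) ^ l) / (1 + x) ^ l))
      (𝓝[>] 0) (𝓝 (α * (l * (1 - l)) / 2)) := by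
  have h := (tendsto_log_combined_ratio_div_sq_nhdsNE (Real.sqrt (1 - α)) l).mono_left
    (nhdsWithin_mono 0 fun x (hx : 0 < x) => hx.ne')
  rwa [sq_sqrt (by linarith), sub_sub_cancel] at h

/-- For fixed `α, λ ∈ [0,1]` and `β = √(1−α)`, the limit as `x → 0⁺` of
`(1/x²)·log((λ(1−β)x + (1+βx)^λ)/(1+x)^λ)` is `α·λ(1−λ)/2`. -/
theorem tendsto_log_combined_ratio_div_sq (α l : ℝ)
    (hα0 : 0 ≤ α) (hα1 : α ≤ 1) (hl0 : 0 ≤ l) (hl1 : l ≤ 1) :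
    Tendsto (fun x : ℝ =>
        (1 / x ^ 2) * Real.log ((l * (1 - Real.sqrt (1 - α)) * x +
          (1 + Real.sqrt (1 - α) * x) ^ l) / (1 + x) ^ l))
      (𝓝[>] 0) (𝓝 (α * (l * (1 - l)) / 2)) :=
  tendsto_log_combined_ratio_div_sq_general α l hα1
end

section
/- Let N be a standard Poisson process, b > 0, and T_b = inf{t ≥ 0 : N_t − (1+b)t = −1}. Then T_b is almost surely finite, N_{T_b} − (1+b)T_b = −1, and for every λ > 0, E[exp(−T_b·f_b(λ))] ≤ exp(−λ), where f_b(λ) = exp(−λ) + λ(1+b) − 1. -/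
/-!
For `λ ≥ 0` the process `exp (-λ N_t - t (e^{-λ} - 1))` is a martingale. At the first passage
`T_b` of `N_t - (1 + b) t` to `-1` it equals `exp (λ - T_b f_b(λ))`: the path jumps only upwards,
so it reaches the line `(1 + b) t - 1` exactly, and optional stopping gives
`E[exp (-T_b f_b(λ))] ≤ e^{-λ}`. To use discrete-time optional stopping, stop instead at the first
point of the grid `k / (n + 1)`, `k ≤ (n + 1)²`, where the path lies on or below the line. Right
continuity keeps the path below the line on a whole interval `[T_b, T_b + ε)`, so these grid times
converge to `T_b`, and dominated convergence passes the bound to the limit. That `T_b` is almost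
surely finite is Chernoff's bound `P(N_n ≥ (1 + b) n - 1) → 0`.
-/

open MeasureTheory Filter Topology ProbabilityTheory Real Set
open scoped NNReal

section

variable {Ω : Type*} {m0 : MeasurableSpace Ω} {μ : Measure Ω}

lemma hasSum_poissonMeasure_exp_mul (r : ℝ≥0) (a : ℝ) :
    HasSum (fun n : ℕ => (exp (-r) * r ^ n / n.factorial) * exp (a * n))
      (exp (r * (exp a - 1))) := by
  have h := ((NormedSpace.expSeries_div_hasSum_exp ((r : ℝ) * exp a)).mul_left (exp (-r)))
  rw [← exp_eq_exp_ℝ, ← exp_add] at h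
  rw [show (r : ℝ) * (exp a - 1) = -r + r * exp a by ring]
  refine h.congr_fun fun n => ?_
  rw [mul_comm a, exp_nat_mul, mul_pow]; ring

lemma integral_exp_mul_poissonMeasure (r : ℝ≥0) (a : ℝ) :
    ∫ n, exp (a * n) ∂poissonMeasure r = exp (r * (exp a - 1)) := by
  rw [integral_poissonMeasure]
  exact (hasSum_poissonMeasure_exp_mul r a).tsum_eq

lemma mgf_of_map_eq_poissonMeasure {X : Ω → ℕ} (hX : Measurable X) {r : ℝ≥0}
    (hlaw : μ.map X = poissonMeasure r) (a : ℝ) :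
    mgf (fun ω => (X ω : ℝ)) μ a = exp (r * (exp a - 1)) := by
  rw [mgf, ← integral_exp_mul_poissonMeasure, ← hlaw,
    integral_map hX.aemeasurable (by fun_prop)]

lemma integrable_exp_mul_of_map_eq_poissonMeasure {X : Ω → ℕ} (hX : Measurable X) {r : ℝ≥0}
    (hlaw : μ.map X = poissonMeasure r) (a : ℝ) :
    Integrable (fun ω => exp (a * X ω)) μ :=
  .of_integral_ne_zero <| by
    rw [← mgf, mgf_of_map_eq_poissonMeasure hX hlaw]; positivity

lemma sub_one_lt_mul_log {c : ℝ} (hc : 1 < c) : c - 1 < c * log c := by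
  have h := log_lt_sub_one_of_pos (inv_pos.2 (by linarith)) (inv_ne_one.2 hc.ne')
  rw [log_inv] at h
  have := (mul_lt_mul_iff_of_pos_left (by linarith : 0 < c)).2 h
  rw [mul_sub, mul_inv_cancel₀ (by positivity)] at this
  linarith

lemma ae_exists_lt_of_map_eq_poissonMeasure [IsFiniteMeasure μ] {Z : ℕ → Ω → ℕ}
    (hZ : ∀ n, Measurable (Z n)) (hlaw : ∀ n : ℕ, μ.map (Z n) = poissonMeasure n)
    {c : ℝ} (hc : 1 < c) (d : ℝ) :
    ∀ᵐ ω ∂μ, ∃ n : ℕ, (Z n ω : ℝ) < c * n + d := by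
  -- the optimal exponent in Chernoff's bound
  set θ := log c
  have hθ : 0 < θ := log_pos hc
  have hbound : ∀ n : ℕ, μ.real {ω | ¬ ∃ n, (Z n ω : ℝ) < c * n + d}
      ≤ exp (n * (c - 1 - c * θ) - θ * d) := fun n => calc
    _ ≤ μ.real {ω | c * n + d ≤ (Z n ω : ℝ)} :=
      measureReal_mono fun ω (hω : ¬ _) => not_lt.1 fun h => hω ⟨n, h⟩
    _ ≤ exp (-θ * (c * n + d)) * mgf (fun ω => (Z n ω : ℝ)) μ θ :=
      measure_ge_le_exp_mul_mgf _ hθ.le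
        (integrable_exp_mul_of_map_eq_poissonMeasure (hZ n) (hlaw n) θ)
    _ = exp (n * (c - 1 - c * θ) - θ * d) := by
      rw [mgf_of_map_eq_poissonMeasure (hZ n) (hlaw n), exp_log (by linarith), ← exp_add]
      congr 1; push_cast; ring
  have hlim : Tendsto (fun n : ℕ => exp (n * (c - 1 - c * θ) - θ * d)) atTop (𝓝 0) :=
    tendsto_exp_atBot.comp <| tendsto_atBot_add_const_right _ _ <|
      tendsto_natCast_atTop_atTop.atTop_mul_const_of_neg (by linarith [sub_one_lt_mul_log hc])
  rw [ae_iff, ← measureReal_eq_zero_iff]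
  exact le_antisymm (ge_of_tendsto' hlim hbound) measureReal_nonneg

lemma isLeast_csInf_preimage_of_continuousWithinAt_Ici {α : Type*}
    [ConditionallyCompleteLinearOrderBot α] [TopologicalSpace α] [OrderTopology α]
    {g : α → ℝ} (hg : ∀ t, ContinuousWithinAt g (Ici t) t) {C : Set ℝ} (hC : IsClosed C)
    (hne : (g ⁻¹' C).Nonempty) : IsLeast (g ⁻¹' C) (sInf (g ⁻¹' C)) :=
  ⟨hC.mem_of_frequently_of_tendsto
      ((isGLB_csInf hne (OrderBot.bddBelow _)).frequently_mem hne) (hg _),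
    fun _ ht => csInf_le (OrderBot.bddBelow _) ht⟩

lemma eventually_eq_of_continuousWithinAt_natCast {α : Type*} [TopologicalSpace α]
    {f : α → ℕ} {s : Set α} {t : α} (hf : ContinuousWithinAt (fun x => (f x : ℝ)) s t) :
    ∀ᶠ x in 𝓝[s] t, f x = f t := by
  have := (Nat.isClosedEmbedding_coe_real.isInducing.continuousWithinAt_iff (f := f)).2 hf
  simpa [ContinuousWithinAt, nhds_discrete] using this

theorem exists_isLeast_sub_mul_eq_neg_one {f : ℝ≥0 → ℕ} (hf0 : f 0 = 0) (hmono : Monotone f)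
    (hrc : ∀ t, ContinuousWithinAt (fun s => (f s : ℝ)) (Ici t) t) {c : ℝ} (hc : 0 ≤ c)
    (hhit : ∃ u, (f u : ℝ) - c * u ≤ -1) :
    ∃ T, IsLeast {t | (f t : ℝ) - c * t = -1} T ∧
      T ∈ lowerBounds {t | (f t : ℝ) - c * t ≤ -1} ∧
      ∀ᶠ s in 𝓝[≥] T, (f s : ℝ) - c * s ≤ -1 := by
  set g : ℝ≥0 → ℝ := fun t => f t - c * t
  have hg : ∀ t, ContinuousWithinAt g (Ici t) t := fun t =>
    (hrc t).sub (continuous_const.mul NNReal.continuous_coe).continuousWithinAt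
  obtain ⟨hTle, hTleast⟩ := isLeast_csInf_preimage_of_continuousWithinAt_Ici hg isClosed_Iic hhit
  set T := sInf (g ⁻¹' Iic (-1))
  have hT0 : T ≠ 0 := fun h => by
    have : g 0 ≤ -1 := h ▸ hTle
    norm_num [g, hf0] at this
  -- Jumps are upward, so the path cannot cross the line strictly below it.
  have hTge : -1 ≤ g T := by
    have hlim : Tendsto (fun s : ℝ≥0 => (f T : ℝ) - c * s) (𝓝[<] T) (𝓝 (g T)) :=
      ((continuous_const.sub (continuous_const.mul NNReal.continuous_coe)).tendsto T).mono_left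
        nhdsWithin_le_nhds
    have : (𝓝[<] T).NeBot := nhdsLT_neBot_of_exists_lt ⟨0, pos_iff_ne_zero.2 hT0⟩
    refine ge_of_tendsto hlim (eventually_nhdsWithin_of_forall fun s (hs : s < T) => ?_)
    have hgs : -1 < g s := not_le.1 fun h => (hTleast h).not_gt hs
    have : (f s : ℝ) ≤ f T := by exact_mod_cast hmono hs.le
    simp only [g] at hgs
    linarith
  refine ⟨T, ⟨le_antisymm hTle hTge, fun t ht => hTleast (le_of_eq ht)⟩, hTleast, ?_⟩
  filter_upwards [eventually_eq_of_continuousWithinAt_natCast (hrc T), self_mem_nhdsWithin]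
    with s hs (hTs : T ≤ s)
  have : c * T ≤ c * s := mul_le_mul_of_nonneg_left (by exact_mod_cast hTs) hc
  have : g T ≤ -1 := hTle
  simp only [g] at this
  rw [hs]
  linarith

noncomputable def gridTime (n k : ℕ) : ℝ≥0 := k / (n + 1)

lemma gridTime_zero (n : ℕ) : gridTime n 0 = 0 := by simp [gridTime]

lemma monotone_gridTime (n : ℕ) : Monotone (gridTime n) := fun _ _ h =>
  div_le_div_of_nonneg_right (by exact_mod_cast h) (by positivity)

lemma tendsto_gridTime_ceil (T : ℝ≥0) :
    Tendsto (fun n => gridTime n ⌈T * (n + 1)⌉₊) atTop (𝓝[≥] T) := by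
  have hlow : ∀ n : ℕ, T ≤ gridTime n ⌈T * (n + 1)⌉₊ := fun n =>
    (le_div_iff₀ (by positivity)).2 (Nat.le_ceil _)
  have hup : ∀ n : ℕ, gridTime n ⌈T * (n + 1)⌉₊ ≤ T + 1 / (n + 1) := fun n => by
    rw [gridTime, div_le_iff₀ (by positivity), add_mul, one_div_mul_cancel (by positivity)]
    exact (Nat.ceil_lt_add_one (by positivity)).le
  have hlim : Tendsto (fun n : ℕ => T + 1 / ((n : ℝ≥0) + 1)) atTop (𝓝 T) := by
    simpa using tendsto_const_nhds.add (tendsto_one_div_add_atTop_nhds_zero_nat (𝕜 := ℝ≥0))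
  exact tendsto_nhdsWithin_iff.2 ⟨tendsto_of_tendsto_of_tendsto_of_le_of_le tendsto_const_nhds hlim
    hlow hup, Eventually.of_forall hlow⟩

noncomputable def firstGridHit (N : ℝ≥0 → Ω → ℕ) (c : ℝ) (t : ℕ → ℝ≥0) (K : ℕ) : Ω → ℕ :=
  hittingBtwn (fun k ω => (N (t k) ω : ℝ) - c * t k) (Iic (-1)) 0 K

theorem tendsto_gridTime_firstGridHit {N : ℝ≥0 → Ω → ℕ} {c : ℝ} {ω : Ω} {T : ℝ≥0}
    (hT : T ∈ lowerBounds {s | (N s ω : ℝ) - c * s ≤ -1})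
    (hright : ∀ᶠ s in 𝓝[≥] T, (N s ω : ℝ) - c * s ≤ -1) :
    Tendsto (fun n => gridTime n (firstGridHit N c (gridTime n) ((n + 1) ^ 2) ω)) atTop
      (𝓝[{s | (N s ω : ℝ) - c * s ≤ -1}] T) := by
  set k : ℕ → ℕ := fun n => ⌈T * (n + 1)⌉₊
  set τ : ℕ → ℕ := fun n => firstGridHit N c (gridTime n) ((n + 1) ^ 2) ω
  have hk : ∀ᶠ n in atTop, k n ≤ (n + 1) ^ 2 ∧
      (N (gridTime n (k n)) ω : ℝ) - c * gridTime n (k n) ≤ -1 := by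
    refine (eventually_ge_atTop ⌈T⌉₊).and ((tendsto_gridTime_ceil T).eventually hright) |>.mono
      fun n ⟨hn, hhit⟩ => ⟨Nat.ceil_le.2 ?_, hhit⟩
    have : T ≤ n + 1 := (Nat.ceil_le.1 hn).trans (by simp)
    calc T * (n + 1) ≤ (n + 1) * (n + 1) := by gcongr
      _ = ((n + 1) ^ 2 : ℕ) := by push_cast; ring
  have hτ : ∀ᶠ n in atTop, τ n ≤ k n ∧
      (N (gridTime n (τ n)) ω : ℝ) - c * gridTime n (τ n) ≤ -1 :=
    hk.mono fun n ⟨hkK, hhit⟩ => ⟨hittingBtwn_le_of_mem (Nat.zero_le _) hkK hhit,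
      hittingBtwn_mem_set (u := fun j ω => (N (gridTime n j) ω : ℝ) - c * gridTime n j)
        (s := Iic (-1)) ⟨k n, ⟨Nat.zero_le _, hkK⟩, hhit⟩⟩
  refine tendsto_nhdsWithin_iff.2 ⟨tendsto_of_tendsto_of_tendsto_of_le_of_le' tendsto_const_nhds
    ((tendsto_gridTime_ceil T).mono_right nhdsWithin_le_nhds) ?_ ?_, hτ.mono fun n h => h.2⟩
  · exact hτ.mono fun n h => hT h.2
  · exact hτ.mono fun n h => monotone_gridTime n h.1

lemma indep_comap_sub_natural {S : ℕ → Ω → ℝ} (hS : ∀ k, StronglyMeasurable (S k))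
    (hS0 : S 0 = 0) {k : ℕ} (hind : iIndepFun (fun i : Fin (k + 1) => S (i + 1) - S i) μ) :
    Indep (MeasurableSpace.comap (S (k + 1) - S k) inferInstance)
      (Filtration.natural S hS k) μ := by
  have hsplit := indep_iSup_of_disjoint (fun i => ((hS _).measurable.sub
      (hS _).measurable).comap_le) hind.iIndep (S := {Fin.last k}) (T := {i | (i : ℕ) < k})
    (by simp)
  refine indep_of_indep_of_le hsplit (le_iSup₂_of_le (Fin.last k) rfl le_rfl) ?_
  refine iSup₂_le fun j (hj : j ≤ k) => Measurable.comap_le ?_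
  rw [← sub_zero (S j), ← hS0, ← Finset.sum_range_sub, Finset.sum_fn]
  refine Finset.measurable_sum _ fun i hi => ?_
  have hik : i < k := (Finset.mem_range.1 hi).trans_le hj
  exact (comap_measurable _).mono (le_iSup₂_of_le (⟨i, by omega⟩ : Fin (k + 1)) hik le_rfl) le_rfl

theorem martingale_exp_mul_sub [IsFiniteMeasure μ] {F : Filtration ℕ m0} {S : ℕ → Ω → ℝ}
    (hS : StronglyAdapted F S)
    (hindep : ∀ k, Indep (MeasurableSpace.comap (S (k + 1) - S k) inferInstance) (F k) μ)
    {a : ℝ} {C : ℕ → ℝ} (h0 : Integrable (fun ω => exp (a * S 0 ω)) μ)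
    (hmgf : ∀ k, mgf (S (k + 1) - S k) μ a = exp (C (k + 1) - C k)) :
    Martingale (fun k ω => exp (a * S k ω - C k)) F μ := by
  set M : ℕ → Ω → ℝ := fun k ω => exp (a * S k ω - C k)
  have hSm : ∀ k, Measurable (S k) := fun k => (hS k).measurable.mono (F.le k) le_rfl
  set Z : ℕ → Ω → ℝ := fun k ω => exp (a * (S (k + 1) - S k) ω - (C (k + 1) - C k))
  have hMZ : ∀ k, M (k + 1) = M k * Z k := fun k => by
    ext ω; simp only [M, Z, Pi.mul_apply, Pi.sub_apply, ← exp_add]; ring_nf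
  have hMsm : StronglyAdapted F M := fun k =>
    (measurable_exp.comp (((hS k).measurable.const_mul a).sub_const _)).stronglyMeasurable
  have hZsm : ∀ k,
      StronglyMeasurable[MeasurableSpace.comap (S (k + 1) - S k) inferInstance] (Z k) := fun k =>
    (measurable_exp.comp (((comap_measurable _).const_mul a).sub_const _)).stronglyMeasurable
  have hZint : ∀ k, Integrable (Z k) μ := fun k => by
    have : Integrable (fun ω => exp (a * (S (k + 1) - S k) ω)) μ :=
      .of_integral_ne_zero (by rw [← mgf, hmgf]; positivity)
    simpa only [Z, sub_eq_add_neg, exp_add] using this.mul_const _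
  have hZmean : ∀ k, μ[Z k] = 1 := fun k => by
    simp only [Z, sub_eq_add_neg (a * _), exp_add]
    rw [integral_mul_const, ← mgf, hmgf, ← exp_add, add_neg_cancel, exp_zero]
  have hMint : ∀ k, Integrable (M k) μ := by
    intro k
    induction k with
    | zero => simpa only [M, sub_eq_add_neg, exp_add] using h0.mul_const _
    | succ k ih =>
      rw [hMZ]
      refine IndepFun.integrable_mul ?_ ih (hZint k)
      rw [IndepFun_iff_Indep]
      exact indep_of_indep_of_le (hindep k).symm (hMsm k).measurable.comap_le
        (hZsm k).measurable.comap_le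
  refine martingale_nat hMsm hMint fun k => ?_
  have : SigmaFinite (μ.trim (F.le k)) := (isFiniteMeasure_trim (F.le k)).toSigmaFinite
  rw [hMZ]
  filter_upwards [condExp_mul_of_stronglyMeasurable_left (hMsm k) (hMZ k ▸ hMint (k + 1)) (hZint k),
    condExp_indep_eq (((hSm _).sub (hSm _)).comap_le) (F.le k) (hZsm k) (hindep k)] with ω h1 h2
  rw [h1, Pi.mul_apply, h2, hZmean, mul_one]

/-- A unit-rate Poisson counting process; nothing is assumed about the regularity of its paths. -/
structure IsPoissonProcess (N : ℝ≥0 → Ω → ℕ) (μ : Measure Ω) : Prop where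
  measurable : ∀ t, Measurable (N t)
  zero : ∀ ω, N 0 ω = 0
  monotone : ∀ ω, Monotone fun t => N t ω
  map_sub : ∀ s t : ℝ≥0, s ≤ t → μ.map (fun ω => N t ω - N s ω) = poissonMeasure (t - s)
  iIndepFun_sub : ∀ (n : ℕ) (t : ℕ → ℝ≥0), Monotone t →
    iIndepFun (fun (i : Fin n) ω => N (t (i.1 + 1)) ω - N (t i.1) ω) μ

namespace IsPoissonProcess

variable {N : ℝ≥0 → Ω → ℕ}

lemma natCast_sub (hN : IsPoissonProcess N μ) {s t : ℝ≥0} (hst : s ≤ t) (ω : Ω) :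
    ((N t ω - N s ω : ℕ) : ℝ) = N t ω - N s ω :=
  Nat.cast_sub (hN.monotone ω hst)

lemma map_eq (hN : IsPoissonProcess N μ) (t : ℝ≥0) : μ.map (N t) = poissonMeasure t := by
  simpa [hN.zero] using hN.map_sub 0 t zero_le

lemma mgf_sub (hN : IsPoissonProcess N μ) {s t : ℝ≥0} (hst : s ≤ t) (a : ℝ) :
    mgf (fun ω => (N t ω : ℝ) - N s ω) μ a = exp ((t - s) * (exp a - 1)) := by
  simp_rw [← hN.natCast_sub hst, ← NNReal.coe_sub hst]
  exact mgf_of_map_eq_poissonMeasure ((hN.measurable t).sub (hN.measurable s))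
    (hN.map_sub s t hst) a

lemma iIndepFun_natCast_sub (hN : IsPoissonProcess N μ) {t : ℕ → ℝ≥0} (ht : Monotone t) (n : ℕ) :
    iIndepFun (fun (i : Fin n) ω => (N (t (i.1 + 1)) ω : ℝ) - N (t i.1) ω) μ := by
  convert (hN.iIndepFun_sub n t ht).comp (fun _ (k : ℕ) => (k : ℝ)) fun _ => measurable_from_top
    using 2 with i
  ext ω
  exact (hN.natCast_sub (ht (Nat.le_succ _)) ω).symm

lemma stronglyMeasurable_natCast (hN : IsPoissonProcess N μ) (t : ℕ → ℝ≥0) (k : ℕ) :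
    StronglyMeasurable fun ω => (N (t k) ω : ℝ) :=
  (measurable_from_top.comp (hN.measurable _)).stronglyMeasurable

theorem martingale_exp (hN : IsPoissonProcess N μ) [IsFiniteMeasure μ] {t : ℕ → ℝ≥0}
    (ht : Monotone t) (ht0 : t 0 = 0) (a : ℝ) :
    Martingale (fun k ω => exp (a * N (t k) ω - t k * (exp a - 1)))
      (Filtration.natural (fun k ω => (N (t k) ω : ℝ)) (hN.stronglyMeasurable_natCast t)) μ := by
  have hS0 : (fun k ω => (N (t k) ω : ℝ)) 0 = 0 := by ext ω; simp [ht0, hN.zero]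
  refine martingale_exp_mul_sub (Filtration.stronglyAdapted_natural _)
    (fun k => indep_comap_sub_natural _ hS0 (hN.iIndepFun_natCast_sub ht (k + 1)))
    (by simp [ht0, hN.zero]) fun k => (hN.mgf_sub (ht k.le_succ) a).trans (by congr 1; ring)

lemma isStoppingTime_firstGridHit (hN : IsPoissonProcess N μ) (t : ℕ → ℝ≥0) (c : ℝ) (K : ℕ) :
    IsStoppingTime
      (Filtration.natural (fun k ω => (N (t k) ω : ℝ)) (hN.stronglyMeasurable_natCast t))
      (fun ω => (firstGridHit N c t K ω : WithTop ℕ)) :=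
  Adapted.isStoppingTime_hittingBtwn (fun k =>
    ((Filtration.stronglyAdapted_natural (hN.stronglyMeasurable_natCast t) k).measurable.sub_const
      (c * t k))) measurableSet_Iic

lemma measurable_firstGridHit (hN : IsPoissonProcess N μ) (t : ℕ → ℝ≥0) (c : ℝ) (K : ℕ) :
    Measurable (firstGridHit N c t K) := by
  refine measurable_to_countable' fun k => ?_
  have := (hN.isStoppingTime_firstGridHit t c K).measurableSet_eq k
  convert Filtration.le _ k _ this using 1
  ext ω; simp

lemma measurable_natCast_comp (hN : IsPoissonProcess N μ) (t : ℕ → ℝ≥0) {τ : Ω → ℕ}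
    (hτ : Measurable τ) : Measurable fun ω => (N (t (τ ω)) ω : ℝ) :=
  (measurable_from_prod_countable_left (f := fun p : Ω × ℕ => (N (t p.2) p.1 : ℝ))
    fun k => measurable_from_top.comp (hN.measurable (t k))).comp (measurable_id.prodMk hτ)

theorem integral_indicator_exp_firstGridHit_le (hN : IsPoissonProcess N μ)
    [IsProbabilityMeasure μ] {t : ℕ → ℝ≥0} (ht : Monotone t) (ht0 : t 0 = 0) (c : ℝ) {l : ℝ}
    (hl : 0 ≤ l) (K : ℕ) :
    ∫ ω, Set.indicator
        {ω | (N (t (firstGridHit N c t K ω)) ω : ℝ) - c * t (firstGridHit N c t K ω) ≤ -1}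
        (fun ω => exp (-t (firstGridHit N c t K ω) * (exp (-l) + l * c - 1))) ω ∂μ
      ≤ exp (-l) := by
  set τ := firstGridHit N c t K
  set M : ℕ → Ω → ℝ := fun k ω => exp (-l * N (t k) ω - t k * (exp (-l) - 1))
  have hmart := hN.martingale_exp ht ht0 (-l)
  have hτ := hN.isStoppingTime_firstGridHit t c K
  have hτK : ∀ ω, (τ ω : WithTop ℕ) ≤ K := fun ω => by exact_mod_cast hittingBtwn_le (m := K) ω
  have hOST : ∫ ω, stoppedValue M (fun ω => (τ ω : WithTop ℕ)) ω ∂μ ≤ 1 := calc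
    _ ≤ ∫ ω, stoppedValue M (fun _ => (K : WithTop ℕ)) ω ∂μ :=
      hmart.submartingale.expected_stoppedValue_mono hτ (isStoppingTime_const _ _)
        hτK (N := K) fun _ => le_rfl
    _ = ∫ ω, M 0 ω ∂μ := by
      rw [show stoppedValue M (fun _ => (K : WithTop ℕ)) = M K from rfl, ← setIntegral_univ,
        ← setIntegral_univ (f := M 0), hmart.setIntegral_eq (Nat.zero_le K) MeasurableSet.univ]
    _ = 1 := by simp [M, ht0, hN.zero]
  -- `M k = exp (-l * (N (t k) - c * t k)) * exp (-t k * (exp (-l) + l * c - 1))`, and the first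
  -- factor is at least `exp l` on the event.
  have hpt : ∀ ω, {ω | (N (t (τ ω)) ω : ℝ) - c * t (τ ω) ≤ -1}.indicator
      (fun ω => exp (-t (τ ω) * (exp (-l) + l * c - 1))) ω
      ≤ exp (-l) * stoppedValue M (fun ω => (τ ω : WithTop ℕ)) ω := by
    intro ω
    rw [show stoppedValue M (fun ω => (τ ω : WithTop ℕ)) ω = M (τ ω) ω from rfl]
    by_cases hω : ω ∈ {ω | (N (t (τ ω)) ω : ℝ) - c * t (τ ω) ≤ -1}
    · rw [indicator_of_mem hω]
      simp only [M, ← exp_add]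
      gcongr
      nlinarith [hω.out]
    · rw [indicator_of_notMem hω]
      positivity
  calc _ ≤ ∫ ω, exp (-l) * stoppedValue M (fun ω => (τ ω : WithTop ℕ)) ω ∂μ :=
        integral_mono_of_nonneg (ae_of_all _ fun ω => indicator_nonneg (fun _ _ => by positivity) ω)
          ((hmart.submartingale.integrable_stoppedValue hτ hτK).const_mul _)
          (ae_of_all _ hpt)
    _ ≤ exp (-l) := by
      rw [integral_const_mul]
      exact mul_le_of_le_one_right (by positivity) hOST

theorem integral_exp_firstPassage_le [IsProbabilityMeasure μ] (hN : IsPoissonProcess N μ)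
    {c l : ℝ} (hc : 1 ≤ c) (hl : 0 ≤ l) {T : Ω → ℝ≥0}
    (hT : ∀ᵐ ω ∂μ, T ω ∈ lowerBounds {s | (N s ω : ℝ) - c * s ≤ -1} ∧
      ∀ᶠ s in 𝓝[≥] T ω, (N s ω : ℝ) - c * s ≤ -1) :
    ∫ ω, exp (-T ω * (exp (-l) + l * c - 1)) ∂μ ≤ exp (-l) := by
  set f := exp (-l) + l * c - 1
  have hf : 0 ≤ f := by nlinarith [add_one_le_exp (-l)]
  set τ : ℕ → Ω → ℕ := fun n => firstGridHit N c (gridTime n) ((n + 1) ^ 2)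
  set F : ℕ → Ω → ℝ := fun n =>
    {ω | (N (gridTime n (τ n ω)) ω : ℝ) - c * gridTime n (τ n ω) ≤ -1}.indicator
      fun ω => exp (-gridTime n (τ n ω) * f)
  have hFmeas : ∀ n, AEStronglyMeasurable (F n) μ := fun n => by
    have hτm := hN.measurable_firstGridHit (gridTime n) c ((n + 1) ^ 2)
    have hgrid : Measurable fun ω => (gridTime n (τ n ω) : ℝ) :=
      (measurable_from_top (f := fun k : ℕ => (gridTime n k : ℝ))).comp hτm
    refine (Measurable.indicator (by fun_prop)
      (measurableSet_le ?_ measurable_const)).aestronglyMeasurable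
    exact (hN.measurable_natCast_comp _ hτm).sub (hgrid.const_mul c)
  have hFle : ∀ n ω, ‖F n ω‖ ≤ 1 := fun n ω => by
    rw [Real.norm_of_nonneg (indicator_nonneg (fun _ _ => by positivity) _)]
    refine indicator_apply_le' (fun _ => ?_) fun _ => zero_le_one
    exact exp_le_one_iff.2 (by nlinarith [(gridTime n (τ n ω)).coe_nonneg])
  have hFlim : ∀ᵐ ω ∂μ, Tendsto (fun n => F n ω) atTop (𝓝 (exp (-T ω * f))) := by
    filter_upwards [hT] with ω ⟨hlow, hright⟩
    have hτ := tendsto_gridTime_firstGridHit hlow hright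
    have hlim : Tendsto (fun n => exp (-gridTime n (τ n ω) * f)) atTop (𝓝 (exp (-T ω * f))) :=
      ((continuous_exp.comp (NNReal.continuous_coe.neg.mul continuous_const)).tendsto _).comp
        (hτ.mono_right nhdsWithin_le_nhds)
    exact hlim.congr' <| (tendsto_nhdsWithin_iff.1 hτ).2.mono fun n hn =>
      (indicator_of_mem (s := {ω | (N (gridTime n (τ n ω)) ω : ℝ) - c * gridTime n (τ n ω) ≤ -1})
        hn _).symm
  exact le_of_tendsto' (tendsto_integral_of_dominated_convergence (fun _ => 1) hFmeas
      (integrable_const 1) (fun n => ae_of_all _ (hFle n)) hFlim) fun n =>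
    hN.integral_indicator_exp_firstGridHit_le (monotone_gridTime n) (gridTime_zero n) c hl _

end IsPoissonProcess

end

/-- let `N` be a standard Poisson process (unit rate, independent
Poisson-distributed increments), `b > 0`, and `T_b = inf{t ≥ 0 : N_t - (1+b)t = -1}`.
Then `T_b` is a.s. finite (the hitting set is a.s. nonempty), `N_{T_b} - (1+b)T_b = -1`
a.s., and for every `λ > 0`, `E[exp(-T_b·f_b(λ))] ≤ exp(-λ)` where
`f_b(λ) = exp(-λ) + λ(1+b) - 1`. -/
theorem poisson_hitting_time_exp_bound
    {Ω : Type*} {m0 : MeasurableSpace Ω} (μ : Measure Ω) [IsProbabilityMeasure μ]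
    (N : ℝ≥0 → Ω → ℕ) (b : ℝ) (hb : 0 < b) (Tb : Ω → ℝ≥0)
    (hmeas : ∀ t : ℝ≥0, Measurable (N t))
    (hN0 : ∀ ω, N 0 ω = 0) (hmono : ∀ ω, Monotone fun t => N t ω)
    (hrc : ∀ ω (t : ℝ≥0), ContinuousWithinAt (fun s => (N s ω : ℝ)) (Set.Ici t) t)
    (hlaw : ∀ s t : ℝ≥0, s ≤ t →
      μ.map (fun ω => N t ω - N s ω) = ProbabilityTheory.poissonMeasure (t - s))
    (hindep : ∀ (n : ℕ) (t : ℕ → ℝ≥0), Monotone t →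
      ProbabilityTheory.iIndepFun
        (fun (i : Fin n) ω => N (t (i.1 + 1)) ω - N (t i.1) ω) μ)
    (hTb : ∀ ω, Tb ω = sInf {t : ℝ≥0 | (N t ω : ℝ) - (1 + b) * t = -1}) :
    (∀ᵐ ω ∂μ, {t : ℝ≥0 | (N t ω : ℝ) - (1 + b) * t = -1}.Nonempty) ∧
    (∀ᵐ ω ∂μ, (N (Tb ω) ω : ℝ) - (1 + b) * (Tb ω) = -1) ∧
    ∀ l : ℝ, 0 < l →
      (∫ ω, Real.exp (-(Tb ω : ℝ) * (Real.exp (-l) + l * (1 + b) - 1)) ∂μ)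
        ≤ Real.exp (-l) := by
  have hN : IsPoissonProcess N μ := ⟨hmeas, hN0, hmono, hlaw, hindep⟩
  have hpassage : ∀ᵐ ω ∂μ, IsLeast {t : ℝ≥0 | (N t ω : ℝ) - (1 + b) * t = -1} (Tb ω) ∧
      Tb ω ∈ lowerBounds {t : ℝ≥0 | (N t ω : ℝ) - (1 + b) * t ≤ -1} ∧
      ∀ᶠ s in 𝓝[≥] Tb ω, (N s ω : ℝ) - (1 + b) * s ≤ -1 := by
    filter_upwards [ae_exists_lt_of_map_eq_poissonMeasure (fun n => hmeas n)
      (fun n => hN.map_eq n) (by linarith : 1 < 1 + b) (-1)] with ω ⟨n, hn⟩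
    obtain ⟨T, hleast, hlow, hright⟩ := exists_isLeast_sub_mul_eq_neg_one (c := 1 + b)
      (hN0 ω) (hmono ω) (hrc ω) (by linarith) ⟨n, by push_cast; linarith⟩
    rw [hTb ω, hleast.csInf_eq]
    exact ⟨hleast, hlow, hright⟩
  refine ⟨hpassage.mono fun ω h => ⟨Tb ω, h.1.1⟩, hpassage.mono fun ω h => h.1.1, fun l hl => ?_⟩
  exact hN.integral_exp_firstPassage_le (by linarith) hl.le (hpassage.mono fun ω h => h.2)
end
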